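/- Let k be an algebraically closed field of characteristic 2, f = x^2+y^2z+yz^2, m >= 5, and let Z_m^1, Z_m^2 be the irreducible components of the singular fiber S_m^0 defined as the closures of V(J_m^1) ∩ D(z_1) and V(J_m^2) ∩ D(y_1), where J_m^1 = (x_0,x_1,y_0,y_1,z_0)+(f^{(j)}) and J_m^2 = (x_0,x_1,y_0,z_0,z_1)+(f^{(j)}). Then Z_m^1 ∩ Z_m^2 is contained in Z_m^0 = V((x_0,x_1,x_2,y_0,y_1,z_0,z_1)+(f^{(j)})); equivalently, x_2 lies in the radical of I(Z_m^1) + I(Z_m^2). -/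

import Mathlib

/-!
Let `K = (x_0, x_1, y_0, y_1, z_0, z_1)`; it lies in `I_m^1 + I_m^2`. Modulo `K` each of the three
universal jets is divisible by `t^2`, so `f` of them is `x_2^2 t^4 + O(t^5)` (the `y^2 z + y z^2`
part is `O(t^6)`). Hence `f^{(4)} ≡ x_2^2 (mod K)`, which puts `x_2^2` into `I_m^1 + I_m^2`.
-/

open Finset

/-- The universal `m`-jet `∑_{i=0}^m x_i t^i` in the `j`-th coordinate
(`j = 0, 1, 2` for `x, y, z`), with coefficients in
`R_m = k[x_0,...,x_m, y_0,...,y_m, z_0,...,z_m]`. -/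
noncomputable def jetSer (k : Type*) [Field k] (m : ℕ) (j : Fin 3) :
    Polynomial (MvPolynomial (Fin 3 × Fin (m + 1)) k) :=
  ∑ i : Fin (m + 1), Polynomial.C (MvPolynomial.X (j, i)) * Polynomial.X ^ (i : ℕ)

/-- The coefficient polynomial `f^{(j)} ∈ R_m` for `f = x^2 + y^2 z + y z^2`. -/
noncomputable def fC (k : Type*) [Field k] (m j : ℕ) :
    MvPolynomial (Fin 3 × Fin (m + 1)) k :=
  ((jetSer k m 0) ^ 2 + (jetSer k m 1) ^ 2 * jetSer k m 2
    + jetSer k m 1 * (jetSer k m 2) ^ 2).coeff j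

open Polynomial

lemma jetSer_coeff (k : Type*) [Field k] (m : ℕ) (j : Fin 3) {n : ℕ} (hn : n ≤ m) :
    (jetSer k m j).coeff n = MvPolynomial.X (j, ⟨n, by omega⟩) := by
  rw [jetSer, finsetSum_coeff, Finset.sum_eq_single (⟨n, by omega⟩ : Fin (m + 1))]
  · simp
  · intro i _ hi
    rw [coeff_C_mul_X_pow, if_neg fun h => hi (Fin.ext h.symm)]
  · simp

lemma coeff_four_sq_add_sq_mul_add_mul_sq {S : Type*} [CommRing S] {p q r : S[X]}
    (hp : X ^ 2 ∣ p) (hq : X ^ 2 ∣ q) (hr : X ^ 2 ∣ r) :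
    (p ^ 2 + q ^ 2 * r + q * r ^ 2).coeff 4 = p.coeff 2 ^ 2 := by
  obtain ⟨p, rfl⟩ := hp
  obtain ⟨q, rfl⟩ := hq
  obtain ⟨r, rfl⟩ := hr
  have : (X ^ 2 * p) ^ 2 + (X ^ 2 * q) ^ 2 * (X ^ 2 * r) + X ^ 2 * q * (X ^ 2 * r) ^ 2
      = X ^ 4 * (p ^ 2 + X ^ 2 * (q ^ 2 * r + q * r ^ 2)) := by ring
  rw [this, coeff_X_pow_mul', coeff_X_pow_mul']
  simp [coeff_zero_eq_eval_zero]

lemma fC_four_sub_sq_mem (k : Type*) [Field k] {m : ℕ} (hm : 4 ≤ m) :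
    fC k m 4 - MvPolynomial.X (0, ⟨2, by omega⟩) ^ 2 ∈
      Ideal.span {MvPolynomial.X (2, ⟨1, by omega⟩), MvPolynomial.X (0, ⟨0, by omega⟩),
        MvPolynomial.X (0, ⟨1, by omega⟩), MvPolynomial.X (1, ⟨0, by omega⟩),
        MvPolynomial.X (1, ⟨1, by omega⟩), MvPolynomial.X (2, ⟨0, by omega⟩)} := by
  set K : Ideal (MvPolynomial (Fin 3 × Fin (m + 1)) k) := Ideal.span _
  have hlow (j : Fin 3) : X ^ 2 ∣ (jetSer k m j).map (Ideal.Quotient.mk K) := by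
    refine X_pow_dvd_iff.2 fun d hd => ?_
    rw [coeff_map, jetSer_coeff k m j (by omega), Ideal.Quotient.eq_zero_iff_mem]
    apply Ideal.subset_span
    fin_cases j <;> interval_cases d <;> simp
  rw [← Ideal.Quotient.eq, fC, ← coeff_map]
  simpa [coeff_map, jetSer_coeff k m 0 (show 2 ≤ m by omega)] using
    coeff_four_sq_add_sq_mul_add_mul_sq (hlow 0) (hlow 1) (hlow 2)

/-- Part of Theorem 3.8: with `J_m^1 = (x_0,x_1,y_0,y_1,z_0) + (f^{(j)})`,
`J_m^2 = (x_0,x_1,y_0,z_0,z_1) + (f^{(j)})`, and `I_m^1`, `I_m^2` their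
saturations (contractions of the extensions to the localizations at `z_1`,
resp. `y_1`), the intersection `Z_m^1 ∩ Z_m^2` is contained in
`Z_m^0 = V((x_0,x_1,x_2,y_0,y_1,z_0,z_1) + (f^{(j)}))`; equivalently, `x_2`
lies in the radical of `I_m^1 + I_m^2`. -/
theorem Zm1_inter_Zm2_subset_Zm0 (k : Type*) [Field k] (m : ℕ) (hm : 5 ≤ m) :
    let R := MvPolynomial (Fin 3 × Fin (m + 1)) k
    let fIdeal : Ideal R := Ideal.span {p : R | ∃ j ≤ m, p = fC k m j}
    let y1 : R := MvPolynomial.X (1, ⟨1, by omega⟩)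
    let z1 : R := MvPolynomial.X (2, ⟨1, by omega⟩)
    let J1 : Ideal R :=
      Ideal.span {MvPolynomial.X (0, ⟨0, by omega⟩), MvPolynomial.X (0, ⟨1, by omega⟩),
          MvPolynomial.X (1, ⟨0, by omega⟩), MvPolynomial.X (1, ⟨1, by omega⟩),
          MvPolynomial.X (2, ⟨0, by omega⟩)} ⊔ fIdeal
    let J2 : Ideal R :=
      Ideal.span {MvPolynomial.X (0, ⟨0, by omega⟩), MvPolynomial.X (0, ⟨1, by omega⟩),
          MvPolynomial.X (1, ⟨0, by omega⟩), MvPolynomial.X (2, ⟨0, by omega⟩),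
          MvPolynomial.X (2, ⟨1, by omega⟩)} ⊔ fIdeal
    let I1 : Ideal R :=
      (J1.map (algebraMap R (Localization.Away z1))).comap
        (algebraMap R (Localization.Away z1))
    let I2 : Ideal R :=
      (J2.map (algebraMap R (Localization.Away y1))).comap
        (algebraMap R (Localization.Away y1))
    let I0 : Ideal R :=
      Ideal.span {MvPolynomial.X (0, ⟨0, by omega⟩), MvPolynomial.X (0, ⟨1, by omega⟩),
          MvPolynomial.X (0, ⟨2, by omega⟩), MvPolynomial.X (1, ⟨0, by omega⟩),
          MvPolynomial.X (1, ⟨1, by omega⟩), MvPolynomial.X (2, ⟨0, by omega⟩),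
          MvPolynomial.X (2, ⟨1, by omega⟩)} ⊔ fIdeal
    (PrimeSpectrum.zeroLocus (I1 : Set R) ∩ PrimeSpectrum.zeroLocus (I2 : Set R)
        ⊆ PrimeSpectrum.zeroLocus (I0 : Set R)) ∧
      MvPolynomial.X (0, ⟨2, by omega⟩) ∈ (I1 ⊔ I2).radical := by
  intro R fIdeal y1 z1 J1 J2 I1 I2 I0
  have hK : Ideal.span {MvPolynomial.X (2, ⟨1, by omega⟩), MvPolynomial.X (0, ⟨0, by omega⟩),
        MvPolynomial.X (0, ⟨1, by omega⟩), MvPolynomial.X (1, ⟨0, by omega⟩),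
        MvPolynomial.X (1, ⟨1, by omega⟩), MvPolynomial.X (2, ⟨0, by omega⟩)} ≤ I1 ⊔ I2 := by
    rw [Ideal.span_insert, sup_comm]
    refine sup_le_sup (le_sup_left.trans Ideal.le_comap_map) ?_
    exact (Ideal.span_mono (by simp)).trans (le_sup_left.trans Ideal.le_comap_map)
  have hf : fIdeal ≤ I1 ⊔ I2 := (le_sup_right.trans Ideal.le_comap_map).trans le_sup_left
  have hx2 : MvPolynomial.X (0, ⟨2, by omega⟩) ∈ (I1 ⊔ I2).radical := by
    have hf4 : fC k m 4 ∈ I1 ⊔ I2 := hf (Ideal.subset_span ⟨4, by omega, rfl⟩)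
    exact ⟨2, by simpa using sub_mem hf4 (hK (fC_four_sub_sq_mem k (by omega)))⟩
  have hI0 : I0 ≤ (I1 ⊔ I2).radical := by
    refine sup_le (Ideal.span_le.2 ?_) (hf.trans Ideal.le_radical)
    rintro p (rfl | rfl | rfl | rfl | rfl | rfl | rfl)
    all_goals first
      | exact hx2
      | exact Ideal.le_radical (hK (Ideal.subset_span (by simp)))
  refine ⟨?_, hx2⟩
  rw [← PrimeSpectrum.zeroLocus_sup, ← PrimeSpectrum.zeroLocus_radical]
  exact PrimeSpectrum.zeroLocus_anti_mono_ideal hI0
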